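/- arXiv:1309.0133 — 2 statements merged into one kernel-verified Lean document; each statement's English description precedes it below -/
import Mathlib

section
/- Let G be a finite group and A an abelian subgroup of G. Suppose H ⊆ ℓA × Ar satisfies |H| ≥ κ|A|² for some ℓ, r ∈ G and κ > 0. Build a 4-partite 3-uniform hypergraph on vertex parts V₁ = ℓA, V₂ = Ar, V₃ = ℓAr, V₄ = A, where for each (a,b) ∈ H and c ∈ A the four triples {ac, cb, acb}, {ac, cb, c}, {ac, acb, c}, {cb, acb, c} are edges. Then this hypergraph has at least κ|A|³ edge-disjoint copies of K₄⁽³⁾ (one for each pair ((a,b), c) with (a,b) ∈ H, c ∈ A), and every edge lies in exactly one such copy. -/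
open scoped Classical

/-- The four edges (as 3-element sets of vertices in the 4-partite vertex set `G × Fin 4`,
where `(g, 0) ∈ V₁ = ℓA`, `(g, 1) ∈ V₂ = Ar`, `(g, 2) ∈ V₃ = ℓAr`, `(g, 3) ∈ V₄ = A`)
of the `K₄⁽³⁾` copy generated by the triple `(a, b, c)`:
`{ac, cb, acb}`, `{ac, cb, c}`, `{ac, acb, c}`, `{cb, acb, c}`. -/
def K4copy {G : Type*} [Group G] [DecidableEq G] (a b c : G) :
    Finset (Finset (G × Fin 4)) :=
  { {(a * c, 0), (c * b, 1), (a * c * b, 2)},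
    {(a * c, 0), (c * b, 1), (c, 3)},
    {(a * c, 0), (a * c * b, 2), (c, 3)},
    {(c * b, 1), (a * c * b, 2), (c, 3)} }

lemma K4copy_inj {G : Type*} [Group G] [DecidableEq G] {a b c a' b' c' : G}
    {e : Finset (G × Fin 4)} (he : e ∈ K4copy a b c) (he' : e ∈ K4copy a' b' c') :
    a = a' ∧ b = b' ∧ c = c' := by
  simp only [K4copy, Finset.mem_insert, Finset.mem_singleton] at he he'
  rcases he with rfl|rfl|rfl|rfl <;> rcases he' with h|h|h|h <;>
  · have k := Finset.ext_iff.mp h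
    have k0 := k (a*c, 0); have k1 := k (c*b, 1); have k2 := k (a*c*b, 2); have k3 := k (c, 3)
    simp only [Finset.mem_insert, Finset.mem_singleton, Prod.ext_iff] at k0 k1 k2 k3
    simp at k0 k1 k2 k3 <;>
    first
    | (have hb : b = b' := mul_left_cancel (k0 ▸ k2)
       have hc : c = c' := mul_right_cancel (hb ▸ k1)
       exact ⟨mul_right_cancel (hc ▸ k0), hb, hc⟩)
    | (subst k3
       exact ⟨mul_right_cancel k0, mul_left_cancel k1, rfl⟩)
    | (subst k3
       have ha : a = a' := mul_right_cancel k0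
       exact ⟨ha, mul_left_cancel (ha ▸ k2), rfl⟩)
    | (subst k3
       have hb : b = b' := mul_left_cancel k1
       exact ⟨mul_right_cancel (mul_right_cancel (hb ▸ k2)), hb, rfl⟩)


/-- The hypergraph built from `H ⊆ ℓA × Ar` (with `A` abelian) and `c` ranging over `A`
has at least `κ|A|³` edge-disjoint `K₄⁽³⁾` copies — one for each pair `((a,b), c)` with
`(a,b) ∈ H`, `c ∈ A` — and every edge lies in exactly one copy. -/
theorem stmt_11 {G : Type*} [Group G] [Fintype G] [DecidableEq G]
    (A : Subgroup G) (hA : ∀ x ∈ A, ∀ y ∈ A, x * y = y * x) (ℓ r : G)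
    (κ : ℝ) (hκ : 0 < κ) (H : Finset (G × G))
    (hH : ∀ p ∈ H, (∃ x ∈ A, p.1 = ℓ * x) ∧ ∃ x ∈ A, p.2 = x * r)
    (hcard : κ * (Nat.card A : ℝ) ^ 2 ≤ (H.card : ℝ)) :
    κ * (Nat.card A : ℝ) ^ 3 ≤ ((H ×ˢ (Finset.univ.filter (· ∈ A))).card : ℝ) ∧
    (∀ p ∈ H, ∀ c ∈ A, ∀ q ∈ H, ∀ d ∈ A, (p, c) ≠ (q, d) →
      Disjoint (K4copy p.1 p.2 c) (K4copy q.1 q.2 d)) ∧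
    (∀ p ∈ H, ∀ c ∈ A, ∀ e ∈ K4copy p.1 p.2 c,
      ∀ q ∈ H, ∀ d ∈ A, e ∈ K4copy q.1 q.2 d → (p, c) = (q, d)) := by
  have key := fun {a b c a' b' c' : G} {e} he he' =>
    @K4copy_inj G _ _ a b c a' b' c' e he he'
  refine ⟨?_, ?_, ?_⟩
  · have hn : ((Finset.univ.filter (· ∈ A)).card : ℝ) = (Nat.card A : ℝ) := by
      rw [Nat.card_eq_fintype_card, Fintype.card_subtype]
    rw [Finset.card_product, Nat.cast_mul, hn]
    calc κ * (Nat.card A : ℝ) ^ 3 = κ * (Nat.card A : ℝ) ^ 2 * (Nat.card A : ℝ) := by ring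
    _ ≤ (H.card : ℝ) * (Nat.card A : ℝ) := by
        apply mul_le_mul_of_nonneg_right hcard (by positivity)
  · intro p _ c _ q _ d _ hne
    rw [Finset.disjoint_left]
    intro e he he'
    obtain ⟨h1, h2, h3⟩ := key he he'
    exact hne (by simp [Prod.ext_iff, h1, h2, h3])
  · intro p _ c _ e he q _ d _ he'
    obtain ⟨h1, h2, h3⟩ := key he he'
    simp [Prod.ext_iff, h1, h2, h3]
end

section
/- For every k ≥ 3 there exists c_k > 0 and infinitely many n such that there is a triple system on n elements with at least c_k·n² triples in which no k+2 elements span k or more triples. -/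
set_option maxHeartbeats 1000000
open Finset


lemma binom_sum {α : Type*} [DecidableEq α] (x y : ℝ) (s : Finset α) :
    ∑ t ∈ s.powerset, x ^ t.card * y ^ (s.card - t.card) = (x + y) ^ s.card := by
  induction s using Finset.induction_on with
  | empty => simp
  | @insert a s ha ih =>
    rw [Finset.powerset_insert, Finset.sum_union, Finset.sum_image]
    · have h1 : ∑ t ∈ s.powerset, x ^ t.card * y ^ ((insert a s).card - t.card)
          = y * ∑ t ∈ s.powerset, x ^ t.card * y ^ (s.card - t.card) := by
        rw [Finset.mul_sum]
        refine Finset.sum_congr rfl fun t ht => ?_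
        have hts : t.card ≤ s.card := Finset.card_le_card (Finset.mem_powerset.mp ht)
        rw [Finset.card_insert_of_notMem ha]
        have : s.card + 1 - t.card = (s.card - t.card) + 1 := by omega
        rw [this, pow_succ]
        ring
      have h2 : ∑ t ∈ s.powerset, x ^ (insert a t).card * y ^ ((insert a s).card - (insert a t).card)
          = x * ∑ t ∈ s.powerset, x ^ t.card * y ^ (s.card - t.card) := by
        rw [Finset.mul_sum]
        refine Finset.sum_congr rfl fun t ht => ?_
        have hts : t ⊆ s := Finset.mem_powerset.mp ht
        have hat : a ∉ t := fun h => ha (hts h)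
        rw [Finset.card_insert_of_notMem ha, Finset.card_insert_of_notMem hat]
        have : s.card + 1 - (t.card + 1) = s.card - t.card := by omega
        rw [this, pow_succ]
        ring
      rw [h1, h2, ih, Finset.card_insert_of_notMem ha, pow_succ]
      ring
    · intro t ht u hu htu
      have hat : a ∉ t := fun h => ha ((Finset.mem_powerset.mp ht) h)
      have hau : a ∉ u := fun h => ha ((Finset.mem_powerset.mp hu) h)
      have := congrArg (fun s => Finset.erase s a) htu
      simpa [Finset.erase_insert hat, Finset.erase_insert hau] using this
    · rw [Finset.disjoint_left]
      rintro t ht hti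
      rcases Finset.mem_image.mp hti with ⟨u, hu, rfl⟩
      exact ha ((Finset.mem_powerset.mp ht) (Finset.mem_insert_self a u))

lemma binom_sum_subset {α : Type*} [DecidableEq α] (x y : ℝ) (K F : Finset α) (hF : F ⊆ K) :
    ∑ S ∈ K.powerset.filter (fun S => F ⊆ S), x ^ S.card * y ^ (K.card - S.card)
      = x ^ F.card * (x + y) ^ (K.card - F.card) := by
  have key : ∑ S ∈ K.powerset.filter (fun S => F ⊆ S), x ^ S.card * y ^ (K.card - S.card)
      = ∑ S' ∈ (K \ F).powerset, x ^ (S'.card + F.card) * y ^ ((K \ F).card - S'.card) := by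
    refine Finset.sum_nbij' (fun S => S \ F) (fun S' => S' ∪ F) ?_ ?_ ?_ ?_ ?_
    · intro S hS
      rw [Finset.mem_filter, Finset.mem_powerset] at hS
      exact Finset.mem_powerset.mpr (Finset.sdiff_subset_sdiff hS.1 (Finset.Subset.refl F))
    · intro S' hS'
      rw [Finset.mem_powerset] at hS'
      rw [Finset.mem_filter, Finset.mem_powerset]
      exact ⟨Finset.union_subset (hS'.trans Finset.sdiff_subset) hF, Finset.subset_union_right⟩
    · intro S hS
      rw [Finset.mem_filter, Finset.mem_powerset] at hS
      exact Finset.sdiff_union_of_subset hS.2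
    · intro S' hS'
      rw [Finset.mem_powerset] at hS'
      have : Disjoint S' F := Finset.disjoint_of_subset_left hS' Finset.sdiff_disjoint
      exact Finset.union_sdiff_cancel_right this
    · intro S hS
      rw [Finset.mem_filter, Finset.mem_powerset] at hS
      have h1 : (S \ F).card = S.card - F.card := Finset.card_sdiff_of_subset hS.2
      have h2 : F.card ≤ S.card := Finset.card_le_card hS.2
      have h3 : S.card ≤ K.card := Finset.card_le_card hS.1
      have h4 : (K \ F).card = K.card - F.card := Finset.card_sdiff_of_subset hF
      have e1 : (S \ F).card + F.card = S.card := by omega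
      have e2 : (K \ F).card - (S \ F).card = K.card - S.card := by omega
      rw [e1, e2]
  rw [key]
  have : ∀ S' ∈ (K \ F).powerset, x ^ (S'.card + F.card) * y ^ ((K \ F).card - S'.card)
      = x ^ F.card * (x ^ S'.card * y ^ ((K \ F).card - S'.card)) := by
    intro S' _; rw [pow_add]; ring
  rw [Finset.sum_congr rfl this, ← Finset.mul_sum, binom_sum,
    Finset.card_sdiff_of_subset hF]

/-- For every `k ≥ 3` there are `c_k > 0` and arbitrarily large `n` admitting a triple
system on `n` elements with at least `c_k n²` triples in which no `k+2` elements span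
`k` or more triples. -/
theorem stmt_16 (k : ℕ) (hk : 3 ≤ k) :
    ∃ c : ℝ, 0 < c ∧ ∀ N : ℕ, ∃ n : ℕ, N ≤ n ∧
      ∃ T : Finset (Finset (Fin n)),
        (∀ t ∈ T, t.card = 3) ∧
        c * (n : ℝ) ^ 2 ≤ (T.card : ℝ) ∧
        ∀ W : Finset (Fin n), W.card = k + 2 → (T.filter (fun t => t ⊆ W)).card < k := by
  classical
  -- constants
  set B : ℕ := (k + 2).choose 3 with hBdef
  have hdesc : (k + 2).descFactorial 3 = 6 * B := by
    rw [Nat.descFactorial_eq_factorial_mul_choose]; rfl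
  have h6B : 6 * B = k * (k + 1) * (k + 2) := by
    rw [← hdesc]; simp [Nat.descFactorial]; ring
  have hkB : k ≤ B := by nlinarith [h6B, sq_nonneg k]
  have hB1 : 1 ≤ B := le_trans (by omega : 1 ≤ k) hkB
  set A : ℕ := B * B.choose k with hAdef
  have hA1 : 1 ≤ A := Nat.one_le_iff_ne_zero.mpr (by
    have := Nat.choose_pos hkB
    positivity)
  set D : ℕ := 14 * A with hDdef
  have hD1 : 1 ≤ D := by omega
  refine ⟨1 / (14 * (D : ℝ)), by positivity, fun N => ?_⟩
  classical
  set n : ℕ := max 21 N with hndef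
  have hn21 : 21 ≤ n := le_max_left _ _
  refine ⟨n, le_max_right _ _, ?_⟩
  set K : Finset (Finset (Fin n)) := Finset.powersetCard 3 Finset.univ with hKdef
  set P : Finset (Finset (Fin n)) := Finset.powersetCard (k+2) Finset.univ with hPdef
  set M : ℕ := K.card with hMdef
  have hM : M = n.choose 3 := by
    rw [hMdef, hKdef, Finset.card_powersetCard, Finset.card_univ, Fintype.card_fin]
  have hPcard : P.card = n.choose (k+2) := by
    rw [hPdef, Finset.card_powersetCard, Finset.card_univ, Fintype.card_fin]
  set p : ℝ := 1 / ((D : ℝ) * n) with hpdef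
  have hDn2 : (2:ℝ) ≤ (D:ℝ) * n := by
    have : (1:ℝ) ≤ (D:ℝ) := by exact_mod_cast hD1
    have h2 : (21:ℝ) ≤ (n:ℝ) := by exact_mod_cast hn21
    nlinarith
  have hp0 : 0 < p := by
    rw [hpdef]; positivity
  have hp1 : p < 1 := by
    rw [hpdef, div_lt_one (by linarith)]; linarith
  set q : ℝ := 1 - p with hqdef
  have hq0 : 0 < q := by rw [hqdef]; linarith
  have hpq : p + q = 1 := by rw [hqdef]; ring
  set w : Finset (Finset (Fin n)) → ℝ := fun S => p ^ S.card * q ^ (M - S.card) with hwdef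
  have hw0 : ∀ S, 0 < w S := fun S => by rw [hwdef]; positivity
  have hsum1 : ∑ S ∈ K.powerset, w S = 1 := by
    rw [hwdef]
    simp only []
    rw [binom_sum p q K, hpq, one_pow]
  -- Expectation of the size
  have hsingle : ∀ F : Finset (Finset (Fin n)), F ⊆ K →
      ∑ S ∈ K.powerset.filter (fun S => F ⊆ S), w S = p ^ F.card := by
    intro F hF
    rw [hwdef]
    simp only []
    rw [binom_sum_subset p q K F hF, hpq, one_pow, mul_one]
  have h2 : ∑ S ∈ K.powerset, w S * (S.card : ℝ) = M * p := by
    have step : ∀ S ∈ K.powerset, w S * (S.card : ℝ)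
        = ∑ t ∈ K, (if t ∈ S then w S else 0) := by
      intro S hS
      rw [Finset.mem_powerset] at hS
      rw [Finset.sum_ite_mem, Finset.inter_eq_right.mpr hS, Finset.sum_const, nsmul_eq_mul]
      ring
    rw [Finset.sum_congr rfl step, Finset.sum_comm]
    have inner : ∀ t ∈ K, ∑ S ∈ K.powerset, (if t ∈ S then w S else 0) = p := by
      intro t ht
      rw [← Finset.sum_filter]
      have : K.powerset.filter (fun S => t ∈ S) = K.powerset.filter (fun S => {t} ⊆ S) := by
        apply Finset.filter_congr
        intro S _
        simp [Finset.singleton_subset_iff]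
      rw [this, hsingle {t} (Finset.singleton_subset_iff.mpr ht), Finset.card_singleton, pow_one]
    rw [Finset.sum_congr rfl inner, Finset.sum_const, nsmul_eq_mul, hMdef]
  -- Probability a given (k+2)-set is bad
  have h3 : ∀ W ∈ P, ∑ S ∈ K.powerset,
      (if k ≤ (S.filter (fun t => t ⊆ W)).card then w S else 0)
        ≤ (B.choose k : ℝ) * p ^ k := by
    intro W hW
    have hWcard : W.card = k + 2 := (Finset.mem_powersetCard.mp hW).2
    set KW : Finset (Finset (Fin n)) := K.filter (fun t => t ⊆ W) with hKWdef
    have hKWeq : KW = Finset.powersetCard 3 W := by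
      ext t
      simp only [hKWdef, hKdef, Finset.mem_filter, Finset.mem_powersetCard]
      constructor
      · rintro ⟨⟨-, h3'⟩, hW'⟩; exact ⟨hW', h3'⟩
      · rintro ⟨hW', h3'⟩; exact ⟨⟨Finset.subset_univ t, h3'⟩, hW'⟩
    have hKWcard : KW.card = B := by
      rw [hKWeq, Finset.card_powersetCard, hWcard, hBdef]
    set F𝓕 : Finset (Finset (Finset (Fin n))) := Finset.powersetCard k KW with hFFdef
    have hFFcard : F𝓕.card = B.choose k := by
      rw [hFFdef, Finset.card_powersetCard, hKWcard]
    have point : ∀ S ∈ K.powerset,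
        (if k ≤ (S.filter (fun t => t ⊆ W)).card then w S else 0)
          ≤ ∑ F ∈ F𝓕, (if F ⊆ S then w S else 0) := by
      intro S hS
      by_cases hbad : k ≤ (S.filter (fun t => t ⊆ W)).card
      · rw [if_pos hbad]
        obtain ⟨F, hFsub, hFcard⟩ := Finset.exists_subset_card_eq hbad
        have hFKW : F ⊆ KW := hFsub.trans
          (Finset.filter_subset_filter _ (Finset.mem_powerset.mp hS))
        have hFFF : F ∈ F𝓕 := Finset.mem_powersetCard.mpr ⟨hFKW, hFcard⟩
        have hFS : F ⊆ S := hFsub.trans (Finset.filter_subset _ _)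
        have hle : (if F ⊆ S then w S else 0) ≤ ∑ F ∈ F𝓕, (if F ⊆ S then w S else 0) := by
          refine Finset.single_le_sum (f := fun G => if G ⊆ S then w S else 0) (fun G _ => ?_) hFFF
          split
          · exact (hw0 S).le
          · exact le_refl 0
        rwa [if_pos hFS] at hle
      · rw [if_neg hbad]
        refine Finset.sum_nonneg fun G _ => ?_
        split
        · exact (hw0 S).le
        · exact le_refl 0
    calc ∑ S ∈ K.powerset, (if k ≤ (S.filter (fun t => t ⊆ W)).card then w S else 0)
        ≤ ∑ S ∈ K.powerset, ∑ F ∈ F𝓕, (if F ⊆ S then w S else 0) :=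
          Finset.sum_le_sum point
      _ = ∑ F ∈ F𝓕, ∑ S ∈ K.powerset, (if F ⊆ S then w S else 0) := Finset.sum_comm
      _ = ∑ F ∈ F𝓕, p ^ k := by
          refine Finset.sum_congr rfl fun F hF => ?_
          obtain ⟨hFKW, hFcard⟩ := Finset.mem_powersetCard.mp hF
          have hFK : F ⊆ K := hFKW.trans (Finset.filter_subset _ _)
          rw [← Finset.sum_filter, hsingle F hFK, hFcard]
      _ = (B.choose k : ℝ) * p ^ k := by
          rw [Finset.sum_const, hFFcard, nsmul_eq_mul]
  -- Expected number of bad sets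
  have h4 : ∑ S ∈ K.powerset,
      w S * ((P.filter (fun W => k ≤ (S.filter (fun t => t ⊆ W)).card)).card : ℝ)
        ≤ (n.choose (k+2) : ℝ) * ((B.choose k : ℝ) * p ^ k) := by
    have expand : ∀ S ∈ K.powerset,
        w S * ((P.filter (fun W => k ≤ (S.filter (fun t => t ⊆ W)).card)).card : ℝ)
          = ∑ W ∈ P, (if k ≤ (S.filter (fun t => t ⊆ W)).card then w S else 0) := by
      intro S _
      rw [Finset.card_filter]
      push_cast
      rw [Finset.mul_sum]
      refine Finset.sum_congr rfl fun W _ => ?_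
      split <;> simp
    calc ∑ S ∈ K.powerset,
        w S * ((P.filter (fun W => k ≤ (S.filter (fun t => t ⊆ W)).card)).card : ℝ)
        = ∑ S ∈ K.powerset, ∑ W ∈ P,
            (if k ≤ (S.filter (fun t => t ⊆ W)).card then w S else 0) :=
          Finset.sum_congr rfl expand
      _ = ∑ W ∈ P, ∑ S ∈ K.powerset,
            (if k ≤ (S.filter (fun t => t ⊆ W)).card then w S else 0) := Finset.sum_comm
      _ ≤ ∑ W ∈ P, (B.choose k : ℝ) * p ^ k := Finset.sum_le_sum h3
      _ = (n.choose (k+2) : ℝ) * ((B.choose k : ℝ) * p ^ k) := by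
          rw [Finset.sum_const, hPcard, nsmul_eq_mul]
  -- numeric bound
  have hxn : (21:ℝ) ≤ (n:ℝ) := by exact_mod_cast hn21
  have hd1 : (1:ℝ) ≤ (D:ℝ) := by exact_mod_cast hD1
  have hx0 : (0:ℝ) < (n:ℝ) := by linarith
  have hd0 : (0:ℝ) < (D:ℝ) := by linarith
  have hMreal : (n:ℝ)^3 / 7 ≤ (M:ℝ) := by
    have hdn : n.descFactorial 3 = 6 * n.choose 3 := by
      rw [Nat.descFactorial_eq_factorial_mul_choose]; rfl
    have hdn2 : n.descFactorial 3 = (n-2) * ((n-1) * n) := by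
      simp [Nat.descFactorial]
    have h6M : 6 * M = (n-2) * ((n-1) * n) := by rw [hM, ← hdn, hdn2]
    have hc : (6:ℝ) * M = ((n:ℝ) - 2) * (((n:ℝ) - 1) * n) := by
      have h2n : 2 ≤ n := by omega
      have h1n : 1 ≤ n := by omega
      have := congrArg (fun m : ℕ => (m : ℝ)) h6M
      push_cast [Nat.cast_sub h2n, Nat.cast_sub h1n] at this
      convert this using 2 <;> push_cast <;> ring
    nlinarith [hc, hxn]
  have h6 : 1 / (14 * (D:ℝ)) * (n:ℝ)^2
      ≤ (M:ℝ) * p - (B:ℝ) * ((n.choose (k+2) : ℝ) * ((B.choose k : ℝ) * p ^ k)) := by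
    have hterm1 : (n:ℝ)^2 / (7 * (D:ℝ)) ≤ (M:ℝ) * p := by
      have : ((n:ℝ)^3 / 7) * p ≤ (M:ℝ) * p :=
        mul_le_mul_of_nonneg_right hMreal hp0.le
      refine le_trans (le_of_eq ?_) this
      rw [hpdef]
      field_simp
    have hterm2 : (B:ℝ) * ((n.choose (k+2) : ℝ) * ((B.choose k : ℝ) * p ^ k))
        ≤ (n:ℝ)^2 / (14 * (D:ℝ)) := by
      have hchoose : ((n.choose (k+2) : ℕ) : ℝ) ≤ (n:ℝ)^(k+2) := by
        exact_mod_cast Nat.choose_le_pow n (k+2)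
      have hpk : (0:ℝ) ≤ p ^ k := by positivity
      have step1 : (B:ℝ) * ((n.choose (k+2) : ℝ) * ((B.choose k : ℝ) * p ^ k))
          ≤ (A:ℝ) * ((n:ℝ)^(k+2) * p ^ k) := by
        have hA : (A:ℝ) = (B:ℝ) * (B.choose k : ℝ) := by rw [hAdef]; push_cast; ring
        rw [hA]
        have hB0 : (0:ℝ) ≤ (B:ℝ) := by positivity
        have hBk0 : (0:ℝ) ≤ (B.choose k : ℝ) := by positivity
        calc (B:ℝ) * ((n.choose (k+2) : ℝ) * ((B.choose k : ℝ) * p ^ k))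
            ≤ (B:ℝ) * ((n:ℝ)^(k+2) * ((B.choose k : ℝ) * p ^ k)) := by
              refine mul_le_mul_of_nonneg_left ?_ hB0
              refine mul_le_mul_of_nonneg_right hchoose (by positivity)
          _ = (B:ℝ) * (B.choose k : ℝ) * ((n:ℝ)^(k+2) * p ^ k) := by ring
      have step2 : (A:ℝ) * ((n:ℝ)^(k+2) * p ^ k) = (A:ℝ) * (n:ℝ)^2 / (D:ℝ)^k := by
        rw [hpdef]
        rw [div_pow, one_pow, mul_pow]
        have hxk : ((n:ℝ))^k ≠ 0 := by positivity
        have hdk : ((D:ℝ))^k ≠ 0 := by positivity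
        field_simp
        ring
      have step3 : (A:ℝ) * (n:ℝ)^2 / (D:ℝ)^k ≤ (n:ℝ)^2 / (14 * (D:ℝ)) := by
        rw [div_le_div_iff₀ (by positivity) (by positivity)]
        have hDk : (D:ℝ)^2 ≤ (D:ℝ)^k := pow_le_pow_right₀ hd1 (by omega)
        have hDA : (14:ℝ) * (D:ℝ) * (A:ℝ) = (D:ℝ)^2 := by
          have hD14 : (D:ℝ) = 14 * (A:ℝ) := by rw [hDdef]; push_cast; ring
          rw [hD14]; ring
        calc (A:ℝ) * (n:ℝ)^2 * (14 * (D:ℝ)) = (n:ℝ)^2 * (14 * (D:ℝ) * (A:ℝ)) := by ring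
          _ = (n:ℝ)^2 * (D:ℝ)^2 := by rw [hDA]
          _ ≤ (n:ℝ)^2 * (D:ℝ)^k := mul_le_mul_of_nonneg_left hDk (by positivity)
      calc (B:ℝ) * ((n.choose (k+2) : ℝ) * ((B.choose k : ℝ) * p ^ k))
          ≤ (A:ℝ) * ((n:ℝ)^(k+2) * p ^ k) := step1
        _ = (A:ℝ) * (n:ℝ)^2 / (D:ℝ)^k := step2
        _ ≤ (n:ℝ)^2 / (14 * (D:ℝ)) := step3
    have heq : (n:ℝ)^2 / (7 * (D:ℝ)) - (n:ℝ)^2 / (14 * (D:ℝ)) = 1 / (14 * (D:ℝ)) * (n:ℝ)^2 := by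
      field_simp
      ring
    linarith
  -- existence of a good sample
  set v : Finset (Finset (Fin n)) → ℝ := fun S =>
    (S.card : ℝ) - (B:ℝ) * ((P.filter (fun W => k ≤ (S.filter (fun t => t ⊆ W)).card)).card : ℝ)
    with hvdef
  have hsumv : ∑ S ∈ K.powerset, (1 / (14 * (D:ℝ)) * (n:ℝ)^2) * w S
      ≤ ∑ S ∈ K.powerset, v S * w S := by
    have lhs_eq : ∑ S ∈ K.powerset, (1 / (14 * (D:ℝ)) * (n:ℝ)^2) * w S
        = 1 / (14 * (D:ℝ)) * (n:ℝ)^2 := by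
      rw [← Finset.mul_sum, hsum1, mul_one]
    have rhs_eq : ∑ S ∈ K.powerset, v S * w S
        = (∑ S ∈ K.powerset, w S * (S.card : ℝ))
          - (B:ℝ) * ∑ S ∈ K.powerset,
              w S * ((P.filter (fun W => k ≤ (S.filter (fun t => t ⊆ W)).card)).card : ℝ) := by
      rw [Finset.mul_sum, ← Finset.sum_sub_distrib]
      refine Finset.sum_congr rfl fun S _ => ?_
      rw [hvdef]; ring
    rw [lhs_eq, rhs_eq]
    have hBnn : (0:ℝ) ≤ (B:ℝ) := by positivity
    have := mul_le_mul_of_nonneg_left h4 hBnn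
    rw [h2]
    linarith [h6]
  obtain ⟨S, hSmem, hSineq⟩ := Finset.exists_le_of_sum_le
    ⟨∅, Finset.mem_powerset.mpr (Finset.empty_subset K)⟩ hsumv
  have hcn : 1 / (14 * (D:ℝ)) * (n:ℝ)^2 ≤ v S :=
    le_of_mul_le_mul_right (by linarith [hSineq]) (hw0 S)
  -- Build the final system by deletion
  have hSK : S ⊆ K := Finset.mem_powerset.mp hSmem
  set Bad : Finset (Finset (Fin n)) :=
    P.filter (fun W => k ≤ (S.filter (fun t => t ⊆ W)).card) with hBaddef
  set T : Finset (Finset (Fin n)) :=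
    S.filter (fun t => ∀ W ∈ P, t ⊆ W → (S.filter (fun u => u ⊆ W)).card < k) with hTdef
  have hTS : T ⊆ S := Finset.filter_subset _ _
  refine ⟨T, ?_, ?_, ?_⟩
  · intro t ht
    have : t ∈ K := hSK (hTS ht)
    exact (Finset.mem_powersetCard.mp this).2
  · -- size bound
    have hKWB : ∀ W ∈ P, (K.filter (fun t => t ⊆ W)).card = B := by
      intro W hW
      have hWcard : W.card = k + 2 := (Finset.mem_powersetCard.mp hW).2
      have hKWeq : K.filter (fun t => t ⊆ W) = Finset.powersetCard 3 W := by
        ext t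
        simp only [hKdef, Finset.mem_filter, Finset.mem_powersetCard]
        constructor
        · rintro ⟨⟨-, h3'⟩, hW'⟩; exact ⟨hW', h3'⟩
        · rintro ⟨hW', h3'⟩; exact ⟨⟨Finset.subset_univ t, h3'⟩, hW'⟩
      rw [hKWeq, Finset.card_powersetCard, hWcard, hBdef]
    have hsub : S \ T ⊆ Bad.biUnion (fun W => K.filter (fun t => t ⊆ W)) := by
      intro t ht
      rw [Finset.mem_sdiff] at ht
      obtain ⟨htS, htT⟩ := ht
      rw [hTdef, Finset.mem_filter] at htT
      push_neg at htT
      obtain ⟨W, hWP, htW, hcard⟩ := htT htS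
      rw [Finset.mem_biUnion]
      refine ⟨W, ?_, ?_⟩
      · rw [hBaddef, Finset.mem_filter]; exact ⟨hWP, hcard⟩
      · rw [Finset.mem_filter]; exact ⟨hSK htS, htW⟩
    have hcard1 : (S \ T).card ≤ Bad.card * B := by
      refine le_trans (Finset.card_le_card hsub) ?_
      refine le_trans Finset.card_biUnion_le ?_
      have : ∀ W ∈ Bad, (K.filter (fun t => t ⊆ W)).card = B := fun W hW =>
        hKWB W (by rw [hBaddef] at hW; exact (Finset.mem_filter.mp hW).1)
      rw [Finset.sum_congr rfl this, Finset.sum_const, smul_eq_mul]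
    have hTle : T.card ≤ S.card := Finset.card_le_card hTS
    have hsplit : (S \ T).card = S.card - T.card := Finset.card_sdiff_of_subset hTS
    have hnat : S.card ≤ T.card + Bad.card * B := by omega
    have hreal : (S.card : ℝ) - (B:ℝ) * (Bad.card : ℝ) ≤ (T.card : ℝ) := by
      have := (Nat.cast_le (α := ℝ)).mpr hnat
      push_cast at this
      linarith
    rw [hvdef] at hcn
    simp only [] at hcn
    rw [hBaddef] at hreal
    linarith [hcn, hreal]
  · -- the property
    intro W hWcard
    have hWP : W ∈ P :=
      Finset.mem_powersetCard.mpr ⟨Finset.subset_univ W, hWcard⟩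
    by_contra hcon
    push_neg at hcon
    have hpos : 0 < (T.filter (fun t => t ⊆ W)).card := lt_of_lt_of_le (by omega) hcon
    obtain ⟨t, ht⟩ := Finset.card_pos.mp hpos
    rw [Finset.mem_filter] at ht
    obtain ⟨htT, htW⟩ := ht
    rw [hTdef, Finset.mem_filter] at htT
    have hlt : (S.filter (fun u => u ⊆ W)).card < k := htT.2 W hWP htW
    have hmono : (T.filter (fun t => t ⊆ W)).card ≤ (S.filter (fun u => u ⊆ W)).card :=
      Finset.card_le_card (Finset.filter_subset_filter _ hTS)
    omega
end
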